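/- Every simple graph G with matching number ν(G) ≤ ν and maximum degree Δ(G) ≤ Δ satisfies e(G) ≤ Δν + ⌊Δ/2⌋·⌊ν/⌈Δ/2⌉⌉ ≤ Δν + ν (Chvátal–Hanson theorem, weak form: e(G) ≤ Δν + ν). -/

import Mathlib

/-!
Induction on the number of edges. If deleting the edges at a vertex `v` lowers the matching
number, we lose at most `Δ` edges and one unit of `ν`. If the edges fall into two parts with
disjoint supports, both parts are handled by induction. Otherwise all edges lie in one component
and every vertex is missed by some maximum matching; by Gallai's lemma a maximum matching then
misses at most one vertex of that component, which therefore has at most `2ν + 1` vertices, and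
`2e ≤ (2ν + 1) · min Δ (2ν) ≤ 2 (Δν + ν)`.
-/

namespace ChvatalHanson

open Finset SimpleGraph

variable {V : Type*} {G H : SimpleGraph V} {F M M' : Finset (Sym2 V)} {e : Sym2 V}
  {u v w x y z : V}

def Covers (F : Finset (Sym2 V)) (v : V) : Prop := ∃ e ∈ F, v ∈ e

/-- Matchings are handled as finite sets of edges; `IsMatching.exists_subgraph` connects them
with `SimpleGraph.Subgraph.IsMatching`. -/
def IsMatching (G : SimpleGraph V) (F : Finset (Sym2 V)) : Prop :=
  (F : Set (Sym2 V)) ⊆ G.edgeSet ∧ ∀ e ∈ F, ∀ f ∈ F, ∀ v ∈ e, v ∈ f → e = f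

lemma covers_insert [DecidableEq V] : Covers (insert e F) v ↔ v ∈ e ∨ Covers F v := by
  simp [Covers, or_and_right, exists_or]

namespace IsMatching

lemma adj (hF : IsMatching G F) (h : s(x, y) ∈ F) : G.Adj x y := hF.1 h

lemma mono (hF : IsMatching G F) (h : G ≤ H) : IsMatching H F :=
  ⟨hF.1.trans (edgeSet_mono h), hF.2⟩

lemma covers_erase [DecidableEq V] (hF : IsMatching G F) (he : e ∈ F) :
    Covers (F.erase e) v ↔ Covers F v ∧ v ∉ e := by
  constructor
  · rintro ⟨f, hf, hvf⟩
    exact ⟨⟨f, mem_of_mem_erase hf, hvf⟩,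
      fun hve => ne_of_mem_erase hf (hF.2 f (mem_of_mem_erase hf) e he v hvf hve)⟩
  · rintro ⟨⟨f, hf, hvf⟩, hve⟩
    exact ⟨f, mem_erase.2 ⟨by rintro rfl; exact hve hvf, hf⟩, hvf⟩

lemma insert [DecidableEq V] (hF : IsMatching G F) (h : G.Adj x y) (hx : ¬Covers F x)
    (hy : ¬Covers F y) : IsMatching G (insert s(x, y) F) := by
  refine ⟨?_, ?_⟩
  · rw [coe_insert, Set.insert_subset_iff]
    exact ⟨h, hF.1⟩
  · have key : ∀ f ∈ F, ∀ v ∈ s(x, y), v ∉ f := by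
      rintro f hf v hv hvf
      rcases Sym2.mem_iff.1 hv with rfl | rfl
      exacts [hx ⟨f, hf, hvf⟩, hy ⟨f, hf, hvf⟩]
    simp only [mem_insert]
    rintro e (rfl | he) f (rfl | hf) v hve hvf
    exacts [rfl, (key f hf v hve hvf).elim, (key e he v hvf hve).elim, hF.2 e he f hf v hve hvf]

lemma subset (hF : IsMatching G F) (h : M ⊆ F) : IsMatching G M :=
  ⟨(coe_subset.2 h).trans hF.1, fun e he f hf => hF.2 e (h he) f (h hf)⟩

lemma union [DecidableEq V] (hM : IsMatching G M) (hM' : IsMatching G M')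
    (h : ∀ v, Covers M v → ¬Covers M' v) : IsMatching G (M ∪ M') := by
  refine ⟨by rw [coe_union]; exact Set.union_subset hM.1 hM'.1, ?_⟩
  simp only [mem_union]
  rintro e (he | he) f (hf | hf) v hve hvf
  exacts [hM.2 e he f hf v hve hvf, (h v ⟨e, he, hve⟩ ⟨f, hf, hvf⟩).elim,
    (h v ⟨f, hf, hvf⟩ ⟨e, he, hve⟩).elim, hM'.2 e he f hf v hve hvf]

lemma mem_support (hF : IsMatching G F) (hv : Covers F v) : v ∈ G.support := by
  obtain ⟨e, he, hve⟩ := hv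
  obtain ⟨w, rfl⟩ := Sym2.mem_iff_exists.1 hve
  exact ⟨w, hF.adj he⟩

end IsMatching

def exchange [DecidableEq V] (F : Finset (Sym2 V)) (w x y : V) : Finset (Sym2 V) :=
  insert s(x, y) (F.erase s(w, x))

section Exchange

variable [DecidableEq V]

lemma erase_subset_exchange : F.erase s(w, x) ⊆ exchange F w x y := subset_insert _ _

lemma IsMatching.covers_exchange (hF : IsMatching G F) (hwx : s(w, x) ∈ F) :
    Covers (exchange F w x y) z ↔ Covers F z ∧ z ≠ w ∨ z = y := by
  have hxw : x ≠ w := (hF.adj hwx).ne'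
  have hx : Covers F x := ⟨_, hwx, Sym2.mem_mk_right w x⟩
  rw [exchange, covers_insert, hF.covers_erase hwx, Sym2.mem_iff, Sym2.mem_iff]
  by_cases hzx : z = x
  · subst hzx; tauto
  · tauto

lemma IsMatching.exchange (hF : IsMatching G F) (hwx : s(w, x) ∈ F) (hxy : G.Adj x y)
    (hy : ¬Covers F y) : IsMatching G (exchange F w x y) := by
  refine (hF.subset (erase_subset _ _)).insert hxy ?_ ?_ <;> rw [hF.covers_erase hwx]
  · exact fun h => h.2 (Sym2.mem_mk_right w x)
  · exact fun h => hy h.1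

lemma card_exchange (hwx : s(w, x) ∈ F) (hy : ¬Covers F y) : #(exchange F w x y) = #F := by
  have hxy : s(x, y) ∉ F.erase s(w, x) := fun h =>
    hy ⟨_, mem_of_mem_erase h, Sym2.mem_mk_right x y⟩
  rw [exchange, card_insert_of_notMem hxy, card_erase_add_one hwx]

end Exchange

section Maximum

variable [Finite V]

noncomputable def matchingNumber (G : SimpleGraph V) : ℕ :=
  sSup {k | ∃ F, IsMatching G F ∧ #F = k}

lemma bddAbove_card_isMatching (G : SimpleGraph V) :
    BddAbove {k | ∃ F, IsMatching G F ∧ #F = k} := by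
  have := Fintype.ofFinite V
  exact ⟨Fintype.card (Sym2 V), by rintro k ⟨F, -, rfl⟩; exact F.card_le_univ⟩

lemma IsMatching.card_le_matchingNumber (hF : IsMatching G F) : #F ≤ matchingNumber G :=
  le_csSup (bddAbove_card_isMatching G) ⟨F, hF, rfl⟩

def IsMaximumMatching (G : SimpleGraph V) (M : Finset (Sym2 V)) : Prop :=
  IsMatching G M ∧ #M = matchingNumber G

lemma exists_isMaximumMatching (G : SimpleGraph V) : ∃ M, IsMaximumMatching G M :=
  Nat.sSup_mem (s := {k | ∃ F, IsMatching G F ∧ #F = k})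
    ⟨0, ∅, ⟨by simp, by simp⟩, rfl⟩ (bddAbove_card_isMatching G)

lemma IsMaximumMatching.covers_or_covers [DecidableEq V] (hM : IsMaximumMatching G M)
    (h : G.Adj x y) : Covers M x ∨ Covers M y := by
  by_contra! hxy
  have hlt : #M < #(insert s(x, y) M) :=
    card_lt_card (ssubset_insert fun he => hxy.1 ⟨_, he, Sym2.mem_mk_left x y⟩)
  have := (hM.1.insert h hxy.1 hxy.2).card_le_matchingNumber
  rw [hM.2] at hlt
  omega

/-- `N` is `M` switched along the `M`-`M'`-alternating path starting at `w`. The path cannot end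
with an edge of `M`, since `M'` is maximum, so it ends at a vertex `t` missed by `M`. The inclusion
`M ∩ M' ⊆ N` is the invariant that carries the induction along the path. -/
theorem exists_exchange_along_alternating_path [DecidableEq V] (hM : IsMatching G M)
    (hM' : IsMaximumMatching G M') (hw : Covers M w) (hw' : ¬Covers M' w) :
    ∃ N, IsMatching G N ∧ #N = #M ∧ M ∩ M' ⊆ N ∧ ¬Covers N w ∧
      ∃ t, ∀ z, Covers N z → Covers M z ∨ z = t := by
  induction hn : #(M \ M') using Nat.strong_induction_on generalizing M' w with
  | _ n ih =>
  obtain ⟨_, hwx, hwe⟩ := hw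
  obtain ⟨x, rfl⟩ := Sym2.mem_iff_exists.1 hwe
  have hwxM' : s(w, x) ∉ M' := fun h => hw' ⟨_, h, Sym2.mem_mk_left w x⟩
  obtain ⟨_, hxy, hxf⟩ := (hM'.covers_or_covers (hM.adj hwx)).resolve_left hw'
  obtain ⟨y, rfl⟩ := Sym2.mem_iff_exists.1 hxf
  have hyw : y ≠ w := by rintro rfl; exact hw' ⟨_, hxy, Sym2.mem_mk_right x y⟩
  have hxyM : s(x, y) ∉ M := fun h => by
    have := hM.2 _ h _ hwx x (Sym2.mem_mk_left x y) (Sym2.mem_mk_right w x)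
    rcases Sym2.eq_iff.1 this with ⟨rfl, -⟩ | ⟨-, rfl⟩
    exacts [(hM.adj hwx).ne rfl, hyw rfl]
  have hinter : M ∩ M' ⊆ M.erase s(w, x) := fun e he => by
    rw [mem_inter] at he
    exact mem_erase.2 ⟨by rintro rfl; exact hwxM' he.2, he.1⟩
  by_cases hy : Covers M y
  · -- move `M'` one step along the path and recurse from `y`
    have hyx : s(y, x) ∈ M' := Sym2.eq_swap ▸ hxy
    set M'' := exchange M' y x w
    have hM'' : IsMaximumMatching G M'' :=
      ⟨hM'.1.exchange hyx (hM.adj hwx).symm hw', (card_exchange hyx hw').trans hM'.2⟩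
    have hy'' : ¬Covers M'' y := by rw [hM'.1.covers_exchange hyx]; tauto
    have hwx'' : s(w, x) ∈ M'' := Sym2.eq_swap ▸ mem_insert_self _ _
    have hsub : M ∩ M' ⊆ M ∩ M'' := fun e he => by
      rw [mem_inter] at he ⊢
      refine ⟨he.1, erase_subset_exchange (mem_erase.2 ⟨?_, he.2⟩)⟩
      rintro rfl
      exact hxyM (Sym2.eq_swap ▸ he.1)
    have hlt : #(M \ M'') < n := hn ▸ card_lt_card ⟨fun e he => by
        rw [mem_sdiff] at he ⊢
        exact ⟨he.1, fun h => he.2 (mem_inter.1 (hsub (mem_inter.2 ⟨he.1, h⟩))).2⟩,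
      fun h => (mem_sdiff.1 (h (mem_sdiff.2 ⟨hwx, hwxM'⟩))).2 hwx''⟩
    obtain ⟨N, hN, hNcard, hNsub, hNy, t, ht⟩ := ih _ hlt hM'' hy hy'' rfl
    have hwxN : s(w, x) ∈ N := hNsub (mem_inter.2 ⟨hwx, hwx''⟩)
    refine ⟨exchange N w x y, hN.exchange hwxN (hM'.1.adj hxy) hNy,
      (card_exchange hwxN hNy).trans hNcard,
      fun e he => erase_subset_exchange (mem_erase.2 ⟨?_, hNsub (hsub he)⟩), ?_, t,
      fun z hz => ?_⟩
    · rintro rfl; exact hwxM' (mem_inter.1 he).2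
    · rw [hN.covers_exchange hwxN]; tauto
    · rcases (hN.covers_exchange hwxN).1 hz with ⟨hz, -⟩ | rfl
      exacts [ht z hz, Or.inl hy]
  · refine ⟨exchange M w x y, hM.exchange hwx (hM'.1.adj hxy) hy, card_exchange hwx hy,
      hinter.trans erase_subset_exchange, ?_, y, fun z hz => ?_⟩
    · rw [hM.covers_exchange hwx]; tauto
    · rcases (hM.covers_exchange hwx).1 hz with ⟨hz, -⟩ | rfl
      exacts [Or.inl hz, Or.inr rfl]

/-- Gallai's lemma. For the first step `u w` of the walk, switch `M` along its alternating path
from `w` with a maximum matching that misses `w`: the result is a maximum matching missing `w` and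
one of `u`, `v`, contradicting maximality (for `u`) or the induction along the walk (for `v`). -/
theorem eq_of_reachable_of_not_covers [DecidableEq V]
    (hG : ∀ w, ∃ M', IsMaximumMatching G M' ∧ ¬Covers M' w) (hM : IsMaximumMatching G M)
    (hu : ¬Covers M u) (hv : ¬Covers M v) (huv : G.Reachable u v) : u = v := by
  obtain ⟨p⟩ := huv
  induction p generalizing M with
  | nil => rfl
  | @cons u w v huw q ih =>
    have hw : Covers M w := (hM.covers_or_covers huw).resolve_left hu
    obtain ⟨M', hM', hw'⟩ := hG w
    obtain ⟨N, hN, hNcard, -, hNw, t, ht⟩ :=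
      exists_exchange_along_alternating_path hM.1 hM' hw hw'
    have hNmax : IsMaximumMatching G N := ⟨hN, hNcard.trans hM.2⟩
    by_contra huv
    by_cases hut : u = t
    · have hNv : ¬Covers N v := fun h => (ht v h).elim hv fun hvt => huv (hut.trans hvt.symm)
      obtain rfl := ih hNmax hNw hNv
      exact hv hw
    · exact (hNmax.covers_or_covers huw).elim (fun h => (ht u h).elim hu hut) hNw

lemma matchingNumber_add_le {G₁ G₂ : SimpleGraph V} (h₁ : G₁ ≤ G) (h₂ : G₂ ≤ G)
    (hd : Disjoint G₁.support G₂.support) :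
    matchingNumber G₁ + matchingNumber G₂ ≤ matchingNumber G := by
  classical
  obtain ⟨M₁, hM₁⟩ := exists_isMaximumMatching G₁
  obtain ⟨M₂, hM₂⟩ := exists_isMaximumMatching G₂
  have hcov : ∀ v, Covers M₁ v → ¬Covers M₂ v := fun v h₁ h₂ =>
    Set.disjoint_left.1 hd (hM₁.1.mem_support h₁) (hM₂.1.mem_support h₂)
  have hdisj : Disjoint M₁ M₂ := disjoint_left.2 fun e he₁ he₂ =>
    hcov _ ⟨e, he₁, Sym2.out_fst_mem e⟩ ⟨e, he₂, Sym2.out_fst_mem e⟩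
  rw [← hM₁.2, ← hM₂.2, ← card_union_of_disjoint hdisj]
  exact ((hM₁.1.mono h₁).union (hM₂.1.mono h₂) hcov).card_le_matchingNumber

lemma exists_isMaximumMatching_not_covers
    (h : matchingNumber G ≤ matchingNumber (G.deleteIncidenceSet v)) :
    ∃ M, IsMaximumMatching G M ∧ ¬Covers M v := by
  obtain ⟨M, hM⟩ := exists_isMaximumMatching (G.deleteIncidenceSet v)
  have hMG := hM.1.mono (G.deleteIncidenceSet_le v)
  refine ⟨M, ⟨hMG, le_antisymm hMG.card_le_matchingNumber (hM.2 ▸ h)⟩, ?_⟩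
  rintro ⟨e, he, hve⟩
  obtain ⟨w, rfl⟩ := Sym2.mem_iff_exists.1 hve
  exact (deleteIncidenceSet_adj.1 (hM.1.adj he)).2.1 rfl

end Maximum

lemma exists_le_disjoint_support_sdiff {a b c d : V} (hab : G.Adj a b) (hcd : G.Adj c d)
    (hac : ¬G.Reachable a c) :
    ∃ H ≤ G, Disjoint H.support (G \ H).support ∧ H ≠ ⊥ ∧ G \ H ≠ ⊥ := by
  set H := (G.induce {x | G.Reachable a x}).spanningCoe
  have hH : ∀ x y, H.Adj x y ↔ G.Adj x y ∧ G.Reachable a x := fun x y => by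
    simpa [H] using fun hxy hx => hx.trans hxy.reachable
  refine ⟨H, spanningCoe_induce_le G _, ?_,
    ne_bot_iff_exists_adj.2 ⟨a, b, (hH a b).2 ⟨hab, .refl a⟩⟩,
    ne_bot_iff_exists_adj.2
      ⟨c, d, (sdiff_adj _ _ _ _).2 ⟨hcd, fun h => hac ((hH c d).1 h).2⟩⟩⟩
  refine Set.disjoint_left.2 fun x ⟨y, hxy⟩ ⟨z, hxz⟩ => ?_
  have hxz : G.Adj x z ∧ ¬H.Adj x z := (sdiff_adj _ _ _ _).1 hxz
  exact hxz.2 ((hH x z).2 ⟨hxz.1, ((hH x y).1 hxy).2⟩)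

section Counting

variable [Fintype V] [DecidableRel G.Adj] {Δ : ℕ}

lemma degree_pos_of_matchingNumber_deleteIncidenceSet_lt
    (h : matchingNumber (G.deleteIncidenceSet v) < matchingNumber G) : 0 < G.degree v := by
  rw [degree_pos_iff_exists_adj]
  by_contra! hv
  have hG : G.deleteIncidenceSet v = G := by
    ext x y
    rw [deleteIncidenceSet_adj, and_iff_left_iff_imp]
    exact fun hxy => ⟨by rintro rfl; exact hv y hxy, by rintro rfl; exact hv x hxy.symm⟩
  exact h.ne (congrArg matchingNumber hG)

variable [DecidableEq V]

lemma card_filter_covers_le [DecidablePred (Covers M)] :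
    #{v | Covers M v} ≤ 2 * #M :=
  calc #{v | Covers M v} ≤ #(M.biUnion Sym2.toFinset) :=
        card_le_card fun v hv => by simpa [Covers] using (mem_filter.1 hv).2
    _ ≤ ∑ e ∈ M, #e.toFinset := card_biUnion_le
    _ ≤ ∑ _e ∈ M, 2 := sum_le_sum fun e _ => by rw [Sym2.card_toFinset]; split_ifs <;> omega
    _ = 2 * #M := by rw [sum_const, smul_eq_mul, mul_comm]

/-- By Gallai's lemma the component of `a` has at most `2ν + 1` vertices, so all degrees are at
most `min Δ (2ν)`. -/
lemma card_edgeFinset_le_of_forall_reachable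
    (hG : ∀ w, ∃ M, IsMaximumMatching G M ∧ ¬Covers M w) (a : V)
    (ha : ∀ x y, G.Adj x y → G.Reachable a x) (hdeg : ∀ v, G.degree v ≤ Δ) :
    #G.edgeFinset ≤ Δ * matchingNumber G + matchingNumber G := by
  classical
  set S : Finset V := {v | G.Reachable a v}
  obtain ⟨M, hM⟩ := exists_isMaximumMatching G
  have hS : #S ≤ 2 * matchingNumber G + 1 := by
    have hmissed : #{v ∈ S | ¬Covers M v} ≤ 1 := card_le_one.2 fun x hx y hy => by
      simp only [S, mem_filter, mem_univ, true_and] at hx hy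
      exact eq_of_reachable_of_not_covers hG hM hx.2 hy.2 (hx.1.symm.trans hy.1)
    have hcovered : #(S.filter (Covers M)) ≤ 2 * #M :=
      (card_le_card (filter_subset_filter _ (subset_univ S))).trans card_filter_covers_le
    rw [← card_filter_add_card_filter_not (s := S) (Covers M), ← hM.2]
    omega
  have hdegS : ∀ v ∈ S, G.degree v ≤ #S - 1 := fun v hv => by
    rw [← card_neighborFinset_eq_degree, ← card_erase_of_mem hv]
    refine card_le_card fun w hw => ?_
    rw [mem_neighborFinset] at hw
    simp only [S, mem_erase, mem_filter, mem_univ, true_and] at hv ⊢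
    exact ⟨hw.ne', hv.trans hw.reachable⟩
  have hsum : ∑ v, G.degree v = ∑ v ∈ S, G.degree v := by
    refine (sum_subset (subset_univ S) fun v _ hv => ?_).symm
    rw [degree_eq_zero_iff_notMem_support]
    rintro ⟨w, hvw⟩
    exact hv (by simpa [S] using ha v w hvw)
  have hm : min Δ (#S - 1) ≤ 2 * matchingNumber G := (min_le_right _ _).trans (by omega)
  have h2e : 2 * #G.edgeFinset ≤ #S * min Δ (#S - 1) := by
    rw [← sum_degrees_eq_twice_card_edges, hsum, ← smul_eq_mul, ← sum_const]
    exact sum_le_sum fun v hv => le_min (hdeg v) (hdegS v hv)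
  nlinarith [Nat.mul_le_mul_right (min Δ (#S - 1)) hS, min_le_left Δ (#S - 1)]

lemma card_edgeFinset_le_of_matchingNumber_deleteIncidenceSet_lt
    (hv : matchingNumber (G.deleteIncidenceSet v) < matchingNumber G) (hdeg : G.degree v ≤ Δ)
    (h : #(G.deleteIncidenceSet v).edgeFinset ≤
      Δ * matchingNumber (G.deleteIncidenceSet v) + matchingNumber (G.deleteIncidenceSet v)) :
    #G.edgeFinset ≤ Δ * matchingNumber G + matchingNumber G := by
  have hdel := G.card_edgeFinset_deleteIncidenceSet v
  have hΔν := Nat.mul_le_mul_left Δ (Nat.succ_le_of_lt hv)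
  rw [Nat.mul_succ] at hΔν
  omega

lemma card_edgeFinset_eq_add_sdiff [DecidableRel H.Adj] (hH : H ≤ G) :
    #G.edgeFinset = #H.edgeFinset + #(G \ H).edgeFinset := by
  have := card_le_card (edgeFinset_mono hH)
  rw [edgeFinset_sdiff, card_sdiff_of_subset (edgeFinset_mono hH)]
  omega

lemma card_edgeFinset_le_of_disjoint_support [DecidableRel H.Adj] (hH : H ≤ G)
    (hd : Disjoint H.support (G \ H).support)
    (h₁ : #H.edgeFinset ≤ Δ * matchingNumber H + matchingNumber H)
    (h₂ : #(G \ H).edgeFinset ≤ Δ * matchingNumber (G \ H) + matchingNumber (G \ H)) :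
    #G.edgeFinset ≤ Δ * matchingNumber G + matchingNumber G := by
  have hν := matchingNumber_add_le hH sdiff_le hd
  have hΔν := Nat.mul_le_mul_left Δ hν
  rw [Nat.mul_add] at hΔν
  rw [card_edgeFinset_eq_add_sdiff hH]
  omega

lemma card_edgeFinset_deleteIncidenceSet_lt (hv : 0 < G.degree v) :
    #(G.deleteIncidenceSet v).edgeFinset < #G.edgeFinset := by
  have := card_le_card (G.incidenceFinset_subset v)
  rw [card_edgeFinset_deleteIncidenceSet, ← card_incidenceFinset_eq_degree] at *
  omega

theorem card_edgeFinset_le (hdeg : ∀ v, G.degree v ≤ Δ) :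
    #G.edgeFinset ≤ Δ * matchingNumber G + matchingNumber G := by
  classical
  induction hn : #G.edgeFinset using Nat.strong_induction_on generalizing G with
  | _ n ih =>
  subst hn
  have ih' : ∀ H ≤ G, ∀ [Fintype H.edgeSet], #H.edgeFinset < #G.edgeFinset →
      #H.edgeFinset ≤ Δ * matchingNumber H + matchingNumber H := fun H hH _ hlt => by
    convert ih _ (by convert hlt) (fun v => (degree_le_of_le hH).trans (hdeg v)) rfl
  by_cases hess : ∃ v, matchingNumber (G.deleteIncidenceSet v) < matchingNumber G
  · obtain ⟨v, hv⟩ := hess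
    exact card_edgeFinset_le_of_matchingNumber_deleteIncidenceSet_lt hv (hdeg v)
      (ih' _ (G.deleteIncidenceSet_le v) (card_edgeFinset_deleteIncidenceSet_lt
        (degree_pos_of_matchingNumber_deleteIncidenceSet_lt hv)))
  push Not at hess
  have hG w := exists_isMaximumMatching_not_covers (hess w)
  by_cases hE : ∃ a b, G.Adj a b
  swap
  · push Not at hE
    simp [edgeFinset_eq_empty.2 (eq_bot_iff_forall_not_adj.2 hE)]
  obtain ⟨a, b, hab⟩ := hE
  by_cases hsplit : ∃ c d, G.Adj c d ∧ ¬G.Reachable a c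
  swap
  · push Not at hsplit
    exact card_edgeFinset_le_of_forall_reachable hG a hsplit hdeg
  obtain ⟨c, d, hcd, hac⟩ := hsplit
  obtain ⟨H, hH, hd, hH₀, hGH₀⟩ := exists_le_disjoint_support_sdiff hab hcd hac
  have hcard := card_edgeFinset_eq_add_sdiff hH
  have h₁ := card_pos.2 (edgeFinset_nonempty.2 hH₀)
  have h₂ := card_pos.2 (edgeFinset_nonempty.2 hGH₀)
  exact card_edgeFinset_le_of_disjoint_support hH hd (ih' H hH (by omega))
    (ih' (G \ H) sdiff_le (by omega))

end Counting

lemma IsMatching.exists_subgraph (hF : IsMatching G F) :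
    ∃ M : G.Subgraph, M.IsMatching ∧ M.edgeSet = F := by
  refine ⟨{ verts := {v | Covers F v}
            Adj := fun x y => s(x, y) ∈ F
            adj_sub := hF.adj
            edge_vert := fun h => ⟨_, h, Sym2.mem_mk_left _ _⟩
            symm := ⟨fun x y h => by rwa [Sym2.eq_swap]⟩ }, ?_, ?_⟩
  · rintro v ⟨e, he, hve⟩
    obtain ⟨w, rfl⟩ := Sym2.mem_iff_exists.1 hve
    refine ⟨w, he, fun y hy => ?_⟩
    rcases Sym2.eq_iff.1 (hF.2 _ hy _ he v (Sym2.mem_mk_left v y) (Sym2.mem_mk_left v w)) with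
      ⟨-, h⟩ | ⟨h₁, h₂⟩
    exacts [h, h₂.trans h₁]
  · ext e
    induction e using Sym2.ind with
    | _ x y => rfl

lemma matchingNumber_le [Finite V] {ν : ℕ}
    (hν : ∀ M : G.Subgraph, M.IsMatching → M.edgeSet.ncard ≤ ν) :
    matchingNumber G ≤ ν := by
  obtain ⟨F, hF, hcard⟩ := exists_isMaximumMatching G
  obtain ⟨M, hM, hMF⟩ := hF.exists_subgraph
  simpa [← hcard, hMF] using hν M hM

end ChvatalHanson

theorem chvatal_hanson_weak_general {V : Type*} [Fintype V] [DecidableEq V]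
    (G : SimpleGraph V) [DecidableRel G.Adj] (ν Δ : ℕ)
    (hmatch : ∀ M : G.Subgraph, M.IsMatching → M.edgeSet.ncard ≤ ν)
    (hdeg : ∀ v, G.degree v ≤ Δ) :
    G.edgeFinset.card ≤ Δ * ν + ν := by
  have hνG := ChvatalHanson.matchingNumber_le hmatch
  calc G.edgeFinset.card
      ≤ Δ * ChvatalHanson.matchingNumber G + ChvatalHanson.matchingNumber G :=
        ChvatalHanson.card_edgeFinset_le hdeg
    _ ≤ Δ * ν + ν := by gcongr

/-- Chvátal–Hanson theorem, weak form: a finite simple graph whose matching number is at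
most `ν` and whose maximum degree is at most `Δ` has at most `Δν + ν` edges. -/
theorem chvatal_hanson_weak {V : Type*} [Fintype V] [DecidableEq V]
    (G : SimpleGraph V) [DecidableRel G.Adj] (ν Δ : ℕ) (hν : 1 ≤ ν) (hΔ : 1 ≤ Δ)
    (hmatch : ∀ M : G.Subgraph, M.IsMatching → M.edgeSet.ncard ≤ ν)
    (hdeg : ∀ v, G.degree v ≤ Δ) :
    G.edgeFinset.card ≤ Δ * ν + ν :=
  chvatal_hanson_weak_general G ν Δ hmatch hdeg
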